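/- The solution Y(T) of 1 = U₁ ∫_ε^{ħω_D} (1/√(ξ² + Y)) tanh(√(ξ² + Y)/(2T)) dξ is strictly decreasing in T on (0, τ₁): if 0 < T₁ < T₂ < τ₁ then Y(T₁) > Y(T₂). -/

import Mathlib

/-!
Suppose `Y T₁ ≤ Y T₂` for some `T₁ < T₂`. Writing `s = √(ξ² + Y)`, the integrand of the gap
equation is `tanh (s / 2T) / s`. It is strictly decreasing in `T` because `tanh` is strictly
increasing, and decreasing in `s` because `x ↦ tanh x / x` is decreasing on `(0, ∞)`
(as `sinh x cosh x > x`). So the integrand at `(Y T₁, T₁)` strictly dominates the one at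
`(Y T₂, T₂)` on `(ε, ω)`, and the two integrals cannot both equal `1 / U₁`.
-/

open Real Set

namespace Real

theorem hasDerivAt_tanh (x : ℝ) : HasDerivAt tanh (1 / cosh x ^ 2) x := by
  have h := (hasDerivAt_sinh x).div (hasDerivAt_cosh x) (cosh_pos x).ne'
  have hnum : cosh x * cosh x - sinh x * sinh x = 1 := by
    nlinarith [cosh_sq_sub_sinh_sq x]
  rwa [hnum, show sinh / cosh = tanh from funext fun y => (tanh_eq_sinh_div_cosh y).symm] at h

theorem differentiable_tanh : Differentiable ℝ tanh :=
  fun x => (hasDerivAt_tanh x).differentiableAt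

theorem tanh_strictMono : StrictMono tanh :=
  strictMono_of_deriv_pos fun x => by
    rw [(hasDerivAt_tanh x).deriv]
    positivity

theorem strictAntiOn_tanh_div_self : StrictAntiOn (fun x => tanh x / x) (Ioi 0) := by
  refine strictAntiOn_of_deriv_neg (convex_Ioi 0)
    (differentiable_tanh.continuous.continuousOn.div continuousOn_id fun x hx => ne_of_gt hx) ?_
  intro x hx
  rw [interior_Ioi, mem_Ioi] at hx
  have hderiv : HasDerivAt (fun y => tanh y / y) ((1 / cosh x ^ 2 * x - tanh x * 1) / x ^ 2) x :=
    (hasDerivAt_tanh x).div (hasDerivAt_id x) hx.ne'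
  rw [hderiv.deriv]
  have hsinh : x < sinh x := self_lt_sinh_iff.mpr hx
  have hcosh : 1 ≤ cosh x := one_le_cosh x
  have hslope : x - sinh x * cosh x < 0 := by nlinarith
  have hnum : 1 / cosh x ^ 2 * x - tanh x * 1 = (x - sinh x * cosh x) / cosh x ^ 2 := by
    rw [tanh_eq_sinh_div_cosh]
    field_simp
  rw [hnum]
  exact div_neg_of_neg_of_pos (div_neg_of_neg_of_pos hslope (by positivity)) (by positivity)

theorem tanh_div_div_lt {s₁ s₂ t₁ t₂ : ℝ} (hs₁ : 0 < s₁) (hs : s₁ ≤ s₂) (ht₁ : 0 < t₁)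
    (ht : t₁ < t₂) : tanh (s₂ / t₂) / s₂ < tanh (s₁ / t₁) / s₁ := by
  have hs₂ : 0 < s₂ := hs₁.trans_le hs
  have hT : tanh (s₂ / t₂) / s₂ < tanh (s₂ / t₁) / s₂ :=
    div_lt_div_of_pos_right (tanh_strictMono (div_lt_div_of_pos_left hs₂ ht₁ ht)) hs₂
  have hS : tanh (s₂ / t₁) / (s₂ / t₁) ≤ tanh (s₁ / t₁) / (s₁ / t₁) :=
    strictAntiOn_tanh_div_self.antitoneOn (mem_Ioi.mpr (by positivity))
      (mem_Ioi.mpr (by positivity)) (div_le_div_of_nonneg_right hs ht₁.le)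
  rw [div_div_eq_mul_div, div_div_eq_mul_div, mul_div_right_comm, mul_div_right_comm] at hS
  exact hT.trans_le (le_of_mul_le_mul_right hS ht₁)

end Real

noncomputable def gapIntegrand (Y T ξ : ℝ) : ℝ :=
  1 / √(ξ ^ 2 + Y) * tanh (√(ξ ^ 2 + Y) / (2 * T))

theorem gapIntegrand_lt_of_le_of_lt {Y₁ Y₂ T₁ T₂ ξ : ℝ} (hξ : 0 < ξ) (hY₁ : 0 ≤ Y₁)
    (hY : Y₁ ≤ Y₂) (hT₁ : 0 < T₁) (hT : T₁ < T₂) :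
    gapIntegrand Y₂ T₂ ξ < gapIntegrand Y₁ T₁ ξ := by
  simp only [gapIntegrand, one_div_mul_eq_div]
  exact tanh_div_div_lt (sqrt_pos.mpr (by positivity)) (sqrt_le_sqrt (by linarith))
    (by positivity) (by linarith)

theorem continuousOn_gapIntegrand {Y : ℝ} (T : ℝ) (hY : 0 ≤ Y) :
    ContinuousOn (gapIntegrand Y T) (Ioi 0) := by
  have hs : Continuous fun ξ : ℝ => √(ξ ^ 2 + Y) := by fun_prop
  refine (continuousOn_const.div hs.continuousOn fun ξ hξ => ?_).mul
    (differentiable_tanh.continuous.comp (hs.div_const _)).continuousOn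
  exact (sqrt_pos.mpr (by have : 0 < ξ := hξ; positivity)).ne'

theorem integral_gapIntegrand_lt {Y₁ Y₂ T₁ T₂ ε ω : ℝ} (hε : 0 < ε) (hεω : ε < ω)
    (hY₁ : 0 ≤ Y₁) (hY : Y₁ ≤ Y₂) (hT₁ : 0 < T₁) (hT : T₁ < T₂) :
    ∫ ξ in ε..ω, gapIntegrand Y₂ T₂ ξ < ∫ ξ in ε..ω, gapIntegrand Y₁ T₁ ξ := by
  have hpos : Icc ε ω ⊆ Ioi 0 := fun ξ hξ => hε.trans_le hξ.1
  refine intervalIntegral.integral_lt_integral_of_continuousOn_of_le_of_exists_lt hεω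
    ((continuousOn_gapIntegrand T₂ (hY₁.trans hY)).mono hpos)
    ((continuousOn_gapIntegrand T₁ hY₁).mono hpos)
    (fun ξ hξ => (gapIntegrand_lt_of_le_of_lt (hpos (Ioc_subset_Icc_self hξ)) hY₁ hY hT₁ hT).le)
    ⟨ε, left_mem_Icc.mpr hεω.le, gapIntegrand_lt_of_le_of_lt hε hY₁ hY hT₁ hT⟩

theorem stmt6_general (U₁ ε ω τ₁ : ℝ) (hU : 0 < U₁) (hε : 0 < ε) (hεω : ε < ω)
    (Y : ℝ → ℝ)
    (hY : ∀ T ∈ Set.Ioo 0 τ₁, 0 ≤ Y T ∧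
      1 = U₁ * ∫ ξ in ε..ω,
        (1 / Real.sqrt (ξ ^ 2 + Y T)) * Real.tanh (Real.sqrt (ξ ^ 2 + Y T) / (2 * T))) :
    ∀ T₁ ∈ Set.Ioo 0 τ₁, ∀ T₂ ∈ Set.Ioo 0 τ₁, T₁ < T₂ → Y T₁ > Y T₂ := by
  intro T₁ hT₁ T₂ hT₂ hT
  by_contra! hle
  obtain ⟨hY₁, hgap₁⟩ := hY T₁ hT₁
  obtain ⟨-, hgap₂⟩ := hY T₂ hT₂
  have hsame : ∫ ξ in ε..ω, gapIntegrand (Y T₂) T₂ ξ = ∫ ξ in ε..ω, gapIntegrand (Y T₁) T₁ ξ :=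
    mul_left_cancel₀ hU.ne' (hgap₂.symm.trans hgap₁)
  exact (integral_gapIntegrand_lt hε hεω hY₁ hle hT₁.1 hT).ne hsame

/-- The solution Y(T) of the simple gap equation is strictly decreasing in T on (0, τ₁). -/
theorem stmt6 (U₁ ε ω τ₁ : ℝ) (hU : 0 < U₁) (hε : 0 < ε) (hεω : ε < ω)
    (hτ₁ : 0 < τ₁)
    (hτ : 1 = U₁ * ∫ ξ in ε..ω, (1 / ξ) * Real.tanh (ξ / (2 * τ₁)))
    (Y : ℝ → ℝ)
    (hY : ∀ T ∈ Set.Ioo 0 τ₁, 0 ≤ Y T ∧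
      1 = U₁ * ∫ ξ in ε..ω,
        (1 / Real.sqrt (ξ ^ 2 + Y T)) * Real.tanh (Real.sqrt (ξ ^ 2 + Y T) / (2 * T))) :
    ∀ T₁ ∈ Set.Ioo 0 τ₁, ∀ T₂ ∈ Set.Ioo 0 τ₁, T₁ < T₂ → Y T₁ > Y T₂ :=
  stmt6_general U₁ ε ω τ₁ hU hε hεω Y hY
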